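/- arXiv:1706.00208 — 4 statements merged into one kernel-verified Lean document; each statement's English description precedes it below -/
import Mathlib

section
/- If R is a nonzero commutative Noetherian normal ring, then R is isomorphic as a ring to a finite product of normal domains; that is, there exist finitely many integral domains R_1, …, R_l, each integrally closed in its field of fractions, such that R ≅ R_1 × ⋯ × R_l. -/
/-!
Since every `R_𝔪` is a domain, `R` is reduced and each maximal ideal contains exactly one minimal
prime, namely the kernel of `R → R_𝔪`. Hence the finitely many minimal primes are pairwise
comaximal and intersect to the nilradical `0`, so the Chinese remainder theorem gives
`R ≅ ∏ R/𝔭`. Each `R/𝔭` is normal because its localization at a maximal ideal `𝔮` is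
`R_𝔪` for `𝔪` the preimage of `𝔮`.
-/

open Ideal

section

variable {R : Type*} [CommRing R]

theorem IsLocalization.ker_algebraMap_eq_of_mem_minimalPrimes (M : Submonoid R) (S : Type*)
    [CommRing S] [Algebra R S] [IsLocalization M S] [IsDomain S] {p : Ideal R}
    (hp : p ∈ minimalPrimes R) (hM : Disjoint (M : Set R) p) :
    RingHom.ker (algebraMap R S) = p := by
  have hle : RingHom.ker (algebraMap R S) ≤ p := fun x hx ↦ by
    rw [← IsLocalization.under_map_of_isPrime_disjoint M S hp.1.1 hM, Ideal.mem_comap,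
      RingHom.mem_ker.mp hx]
    exact zero_mem _
  exact le_antisymm hle (hp.2 ⟨RingHom.ker_isPrime _, bot_le⟩ hle)

theorem IsLocalization.AtPrime.of_comap_quotientMk {I : Ideal R} (q : Ideal (R ⧸ I)) [q.IsPrime]
    (S : Type*) [CommRing S] [Algebra R S] [Algebra (R ⧸ I) S] [IsScalarTower R (R ⧸ I) S]
    [IsLocalization.AtPrime S (q.comap (Ideal.Quotient.mk I))] :
    IsLocalization.AtPrime S q := by
  have hq : (q.comap (Ideal.Quotient.mk I)).primeCompl.map (Ideal.Quotient.mk I) =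
      q.primeCompl :=
    Submonoid.map_comap_eq_of_surjective (f := Ideal.Quotient.mk I) Ideal.Quotient.mk_surjective
      q.primeCompl
  rw [IsLocalization.AtPrime, ← hq]
  refine IsLocalization.of_surjective _ S (Ideal.Quotient.mk I) Ideal.Quotient.mk_surjective
    (RingHom.id S) Function.surjective_id ?_ ?_
  · rw [RingHom.id_comp, IsScalarTower.algebraMap_eq R (R ⧸ I) S]; rfl
  · rw [(RingHom.injective_iff_ker_eq_bot _).mp Function.injective_id]; exact bot_le

theorem Ideal.isCoprime_of_mem_minimalPrimes
    (hdom : ∀ (m : Ideal R) [m.IsMaximal], IsDomain (Localization.AtPrime m))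
    {p q : Ideal R} (hp : p ∈ minimalPrimes R) (hq : q ∈ minimalPrimes R) (hpq : p ≠ q) :
    IsCoprime p q := by
  rw [isCoprime_iff_sup_eq]
  by_contra hne
  obtain ⟨m, hm, hle⟩ := exists_le_maximal _ hne
  have hker (r : Ideal R) (hr : r ∈ minimalPrimes R) (hrm : r ≤ m) :
      RingHom.ker (algebraMap R (Localization.AtPrime m)) = r :=
    IsLocalization.ker_algebraMap_eq_of_mem_minimalPrimes m.primeCompl _ hr
      (Set.disjoint_compl_left_iff_subset.mpr hrm)
  exact hpq ((hker p hp (le_sup_left.trans hle)).symm.trans (hker q hq (le_sup_right.trans hle)))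

theorem Ideal.isIntegrallyClosed_quotient_of_mem_minimalPrimes
    (hnorm : ∀ (m : Ideal R) [m.IsMaximal],
      IsDomain (Localization.AtPrime m) ∧ IsIntegrallyClosed (Localization.AtPrime m))
    {p : Ideal R} (hp : p ∈ minimalPrimes R) : IsIntegrallyClosed (R ⧸ p) := by
  have := hp.1.1
  refine IsIntegrallyClosed.of_localization_maximal fun q _ _ ↦ ?_
  let m := q.comap (Ideal.Quotient.mk p)
  have : m.IsMaximal := comap_isMaximal_of_surjective _ Ideal.Quotient.mk_surjective
  obtain ⟨_, _⟩ := hnorm m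
  have hpm : p ≤ m := fun x hx ↦ by
    rw [mem_comap, Ideal.Quotient.eq_zero_iff_mem.mpr hx]
    exact zero_mem q
  have hker := IsLocalization.ker_algebraMap_eq_of_mem_minimalPrimes m.primeCompl
    (Localization.AtPrime m) hp (Set.disjoint_compl_left_iff_subset.mpr hpm)
  let : Algebra (R ⧸ p) (Localization.AtPrime m) :=
    (Ideal.Quotient.lift p _ fun a ha ↦ by rwa [← RingHom.mem_ker, hker]).toAlgebra
  have : IsScalarTower R (R ⧸ p) (Localization.AtPrime m) :=
    IsScalarTower.of_algebraMap_eq fun _ ↦ rfl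
  have := IsLocalization.AtPrime.of_comap_quotientMk q (Localization.AtPrime m)
  exact .of_equiv
    (IsLocalization.algEquiv q.primeCompl (Localization.AtPrime m) _).toRingEquiv

theorem Ideal.iInf_eq_bot_of_range_eq_minimalPrimes [IsReduced R] {ι : Type*} {P : ι → Ideal R}
    (hP : Set.range P = minimalPrimes R) : ⨅ i, P i = ⊥ := by
  rw [← sInf_range, hP, minimalPrimes, sInf_minimalPrimes]
  exact nilradical_eq_zero R

end

universe u

theorem noetherian_normal_ring_is_finite_product_of_normal_domains_general
    {R : Type u} [CommRing R] [IsNoetherianRing R]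
    (hnorm : ∀ (𝔭 : Ideal R) [𝔭.IsPrime],
      IsDomain (Localization.AtPrime 𝔭) ∧ IsIntegrallyClosed (Localization.AtPrime 𝔭)) :
    ∃ (l : ℕ) (D : Fin l → Type u) (inst : ∀ i, CommRing (D i)),
      letI := inst
      (∀ i, IsDomain (D i) ∧ IsIntegrallyClosed (D i)) ∧
        Nonempty (R ≃+* ∀ i, D i) := by
  have hloc : ∀ (m : Ideal R) [m.IsMaximal],
      IsDomain (Localization.AtPrime m) ∧ IsIntegrallyClosed (Localization.AtPrime m) :=
    fun m _ ↦ hnorm m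
  have : IsReduced R := isReduced_ofLocalizationMaximal R fun m _ ↦
    have := (hloc m).1; inferInstance
  obtain ⟨l, P, hP⟩ := (minimalPrimes.finite_of_isNoetherianRing R).fin_embedding
  have hPmin (i : Fin l) : P i ∈ minimalPrimes R := hP ▸ Set.mem_range_self i
  have (i : Fin l) : (P i).IsPrime := (hPmin i).1.1
  have hcoprime : Pairwise (Function.onFun IsCoprime P) := fun i j hij ↦
    isCoprime_of_mem_minimalPrimes (fun m _ ↦ (hloc m).1) (hPmin i) (hPmin j)
      (P.injective.ne hij)
  refine ⟨l, fun i ↦ R ⧸ P i, fun i ↦ inferInstance,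
    fun i ↦ ⟨inferInstance, isIntegrallyClosed_quotient_of_mem_minimalPrimes hloc (hPmin i)⟩,
    ⟨?_⟩⟩
  exact (RingEquiv.quotientBot R).symm.trans <|
    (quotEquivOfEq (iInf_eq_bot_of_range_eq_minimalPrimes hP).symm).trans <|
      quotientInfRingEquivPiQuotient P hcoprime

/-- A nonzero commutative Noetherian normal ring is isomorphic to a finite product of
integrally closed integral domains. -/
theorem noetherian_normal_ring_is_finite_product_of_normal_domains
    {R : Type u} [CommRing R] [Nontrivial R] [IsNoetherianRing R]
    (hnorm : ∀ (𝔭 : Ideal R) [𝔭.IsPrime],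
      IsDomain (Localization.AtPrime 𝔭) ∧ IsIntegrallyClosed (Localization.AtPrime 𝔭)) :
    ∃ (l : ℕ) (D : Fin l → Type u) (inst : ∀ i, CommRing (D i)),
      letI := inst
      (∀ i, IsDomain (D i) ∧ IsIntegrallyClosed (D i)) ∧
        Nonempty (R ≃+* ∀ i, D i) :=
  noetherian_normal_ring_is_finite_product_of_normal_domains_general hnorm
end

section
/- Let k be a field and let A be the localization of the formal power series ring k⟦x, y⟧ at the multiplicative set {1, y, y², …} of powers of y. Then the quotient A/(x − y) is isomorphic to the field of formal Laurent series k((x)); in particular, the ideal of A generated by x − y is a maximal ideal. -/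
/-!
Under `k⟦x, y⟧ ≃ (k⟦y⟧)⟦x⟧`, the element `x - y` is a monic polynomial of degree one in `x` whose
constant coefficient lies in the ideal `(y)` of the `y`-adically complete ring `k⟦y⟧`. Weierstrass
division by it identifies `k⟦x, y⟧ ⧸ (x - y)` with `k⟦y⟧[x] ⧸ (x - y) ≃ k⟦y⟧`, the class of `y`
going to `y`. Localization commutes with quotients, so inverting `y` turns this into
`A ⧸ (x - y) ≃ k⟦y⟧[1/y] = k((y))`, which is a field.
-/

open MvPowerSeries

theorem Polynomial.isDistinguishedAt_X_sub_C {R : Type*} [CommRing R] {I : Ideal R} {a : R}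
    (ha : a ∈ I) : (X - C a).IsDistinguishedAt I where
  mem {n} hn := by
    obtain rfl : n = 0 := by have := natDegree_X_sub_C_le (R := R) a; omega
    simpa using ha
  monic := monic_X_sub_C a

namespace PowerSeries

variable {R : Type*} [CommRing R] {I : Ideal R} [IsAdicComplete I R] {a : R}

noncomputable def quotientSpanXSubCAlgEquiv (ha : a ∈ I) :
    (R⟦X⟧ ⧸ Ideal.span {X - C a}) ≃ₐ[R] R :=
  ((Polynomial.isDistinguishedAt_X_sub_C ha).algEquivQuotient.trans
    (Ideal.quotientEquivAlgOfEq R (by simp))).symm.trans (Polynomial.quotientSpanXSubCAlgEquiv a)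

@[simp]
theorem quotientSpanXSubCAlgEquiv_mk_C (ha : a ∈ I) (b : R) :
    quotientSpanXSubCAlgEquiv ha (Ideal.Quotient.mk _ (C b)) = b :=
  (quotientSpanXSubCAlgEquiv ha).commutes b

end PowerSeries

namespace MvPowerSeries

variable (R : Type*) [CommRing R] {n : ℕ}

noncomputable def quotientSpanXZeroSubXSuccAlgEquiv (j : Fin n) :
    (MvPowerSeries (Fin (n + 1)) R ⧸
        Ideal.span {(X 0 - X j.succ : MvPowerSeries (Fin (n + 1)) R)}) ≃ₐ[R]
      MvPowerSeries (Fin n) R :=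
  (Ideal.quotientEquivAlg _ _ (finSuccEquiv R n)
      (by simp [Ideal.map_span, finSuccEquiv_X_zero, finSuccEquiv_X_succ])).trans
    ((PowerSeries.quotientSpanXSubCAlgEquiv
      (I := Ideal.span (Set.range (X : Fin n → MvPowerSeries (Fin n) R)))
      (Ideal.subset_span ⟨j, rfl⟩)).restrictScalars R)

@[simp]
theorem quotientSpanXZeroSubXSuccAlgEquiv_mk_X_succ (j : Fin n) :
    quotientSpanXZeroSubXSuccAlgEquiv R j (Ideal.Quotient.mk _ (X j.succ)) = X j := by
  simp [quotientSpanXZeroSubXSuccAlgEquiv, finSuccEquiv_X_succ]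

noncomputable def quotientSpanXZeroSubXOneAlgEquiv :
    (MvPowerSeries (Fin 2) R ⧸ Ideal.span {(X 0 - X 1 : MvPowerSeries (Fin 2) R)}) ≃ₐ[R]
      PowerSeries R :=
  (quotientSpanXZeroSubXSuccAlgEquiv R (0 : Fin 1)).trans
    (renameEquiv R (Equiv.equivPUnit (Fin 1)))

@[simp]
theorem quotientSpanXZeroSubXOneAlgEquiv_mk_X_one :
    quotientSpanXZeroSubXOneAlgEquiv R (Ideal.Quotient.mk _ (X 1)) = PowerSeries.X := by
  change renameEquiv R _
    (quotientSpanXZeroSubXSuccAlgEquiv R 0 (Ideal.Quotient.mk _ (X (Fin.succ 0)))) = _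
  rw [quotientSpanXZeroSubXSuccAlgEquiv_mk_X_succ]
  exact rename_X _ 0

end MvPowerSeries

namespace IsLocalization.Away

variable {R S Rₛ Sₛ : Type*} [CommRing R] [CommRing S] [CommRing Rₛ] [CommRing Sₛ]
  [Algebra R Rₛ] [Algebra S Sₛ]

noncomputable def quotientMapKerEquivOfSurjective (f : R →+* S) (hf : Function.Surjective f)
    (s : R) [IsLocalization.Away s Rₛ] [IsLocalization.Away (f s) Sₛ] :
    (Rₛ ⧸ (RingHom.ker f).map (algebraMap R Rₛ)) ≃+* Sₛ :=
  (Ideal.quotEquivOfEq (IsLocalization.ker_map Sₛ f (Submonoid.map_powers f s)).symm).trans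
    (RingHom.quotientKerEquivOfSurjective
      (IsLocalization.map_surjective_of_surjective (Submonoid.powers s) Rₛ Sₛ hf))

end IsLocalization.Away

/-- Let `A` be the localization of `k⟦x, y⟧` away from `y`. Then `A/(x - y)` is isomorphic
to the field of formal Laurent series `k((x))`; in particular `(x - y)` is a maximal ideal
of `A`. -/
theorem quotient_of_localized_power_series_is_laurent_series (k : Type*) [Field k] :
    Nonempty
      ((Localization.Away (X 1 : MvPowerSeries (Fin 2) k) ⧸
          Ideal.span {algebraMap (MvPowerSeries (Fin 2) k)
            (Localization.Away (X 1 : MvPowerSeries (Fin 2) k)) (X 0 - X 1)}) ≃+*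
        LaurentSeries k) ∧
    (Ideal.span {algebraMap (MvPowerSeries (Fin 2) k)
        (Localization.Away (X 1 : MvPowerSeries (Fin 2) k)) (X 0 - X 1)}).IsMaximal := by
  set e := quotientSpanXZeroSubXOneAlgEquiv k
  set θ : MvPowerSeries (Fin 2) k →+* PowerSeries k := (e : _ ≃+* PowerSeries k).toRingHom.comp
    (Ideal.Quotient.mk (Ideal.span {(X 0 - X 1 : MvPowerSeries (Fin 2) k)}))
  have hθ : θ (X 1) = PowerSeries.X := quotientSpanXZeroSubXOneAlgEquiv_mk_X_one k
  have : IsLocalization.Away (θ (X 1)) (LaurentSeries k) := hθ ▸ inferInstance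
  have hker : (RingHom.ker θ).map
        (algebraMap _ (Localization.Away (X 1 : MvPowerSeries (Fin 2) k))) =
      Ideal.span {algebraMap (MvPowerSeries (Fin 2) k)
        (Localization.Away (X 1 : MvPowerSeries (Fin 2) k)) (X 0 - X 1)} := by
    rw [RingHom.ker_equiv_comp, Ideal.mk_ker, Ideal.map_span, Set.image_singleton]
  let E := (Ideal.quotEquivOfEq hker.symm).trans
    (IsLocalization.Away.quotientMapKerEquivOfSurjective (Sₛ := LaurentSeries k) θ
      (e.surjective.comp Ideal.Quotient.mk_surjective) (X 1))
  exact ⟨⟨E⟩, Ideal.Quotient.maximal_of_isField _ (E.toMulEquiv.isField (Field.toIsField _))⟩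
end

section
/- Let k be a field and let A be the localization of the formal power series ring k⟦x, y⟧ at the multiplicative set {1, y, y², …} of powers of y. Then the ideals of A generated by x and by x − y are two distinct maximal ideals of A; in particular, A is not a local ring. -/
/-!
Modulo `x - c y` every power series `f(x, y)` is congruent to `f(c y, y)`, which is either zero or
a power of `y` times a unit of `k⟦y⟧`. Hence `A / (x - c y) ≅ k⟦y⟧[1/y] = k((y))` is a field.
The shear `x ↦ x - c y`, `y ↦ y` of `k⟦x, y⟧` reduces this to `c = 0`, where it is read off the
coefficients.
-/

open MvPowerSeries

/-- A sufficient condition for `(R ⧸ (t))[1/s]` to be a field. -/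
structure IsAssociatedPowModulo {R : Type*} [CommRing R] (s t : R) : Prop where
  not_dvd_pow : ∀ n : ℕ, ¬ t ∣ s ^ n
  exists_dvd_sub_pow_mul : ∀ f : R, ¬ t ∣ f → ∃ (n : ℕ) (u : R), IsUnit u ∧ t ∣ f - s ^ n * u

namespace IsAssociatedPowModulo

variable {R R' : Type*} [CommRing R] [CommRing R'] {s t : R}

theorem map_ringEquiv (h : IsAssociatedPowModulo s t) (e : R ≃+* R') :
    IsAssociatedPowModulo (e s) (e t) where
  not_dvd_pow n hdvd := h.not_dvd_pow n <| by simpa using map_dvd e.symm hdvd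
  exists_dvd_sub_pow_mul f hf := by
    have hf' : ¬ t ∣ e.symm f := fun hdvd => hf (by simpa using map_dvd e hdvd)
    obtain ⟨n, u, hu, hdvd⟩ := h.exists_dvd_sub_pow_mul _ hf'
    exact ⟨n, e u, hu.map e, by simpa using map_dvd e hdvd⟩

theorem isMaximal_span_away (h : IsAssociatedPowModulo s t) :
    (Ideal.span {algebraMap R (Localization.Away s) t}).IsMaximal := by
  set φ := algebraMap R (Localization.Away s)
  rw [Ideal.isMaximal_iff]
  refine ⟨fun hone => ?_, fun J z hle hz hzJ => ?_⟩
  · obtain ⟨w, hw⟩ := Ideal.mem_span_singleton'.mp hone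
    obtain ⟨⟨p, _, m, rfl⟩, hp⟩ := IsLocalization.surj (Submonoid.powers s) w
    have : φ (s ^ m) = φ (p * t) := by
      rw [map_mul, ← hp, mul_right_comm, hw, one_mul]
    obtain ⟨⟨_, j, rfl⟩, hj⟩ := IsLocalization.exists_of_eq (M := Submonoid.powers s) this
    exact h.not_dvd_pow (j + m) ⟨s ^ j * p, by rw [pow_add, hj]; ring⟩
  · obtain ⟨⟨p, d⟩, hp⟩ := IsLocalization.surj (Submonoid.powers s) z
    have hd : IsUnit (φ d) := IsLocalization.map_units _ d
    have hpJ : φ p ∈ J := hp ▸ J.mul_mem_right _ hzJ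
    by_cases htp : t ∣ p
    · obtain ⟨q, rfl⟩ := htp
      refine absurd ((Ideal.mul_unit_mem_iff_mem _ hd).mp ?_) hz
      rw [hp, map_mul]
      exact Ideal.mul_mem_right _ _ (Ideal.mem_span_singleton_self _)
    obtain ⟨n, u, hu, q, hq⟩ := h.exists_dvd_sub_pow_mul p htp
    have hunit : IsUnit (φ (s ^ n * u)) := by
      rw [map_mul, map_pow]
      exact ((IsLocalization.Away.algebraMap_isUnit s).pow n).mul (hu.map φ)
    have hmem : φ (s ^ n * u) ∈ J := by
      rw [show s ^ n * u = p - t * q by rw [← hq]; ring, map_sub, map_mul]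
      exact J.sub_mem hpJ (J.mul_mem_right _ (hle (Ideal.mem_span_singleton_self _)))
    rw [Ideal.eq_top_of_isUnit_mem J hmem hunit]
    exact Submodule.mem_top

end IsAssociatedPowModulo

namespace MvPowerSeries

section CommRing

variable {R : Type*} [CommRing R]

theorem hasSubst_shear (c : R) : HasSubst ![X 0 + C c * X 1, (X 1 : MvPowerSeries (Fin 2) R)] :=
  hasSubst_of_constantCoeff_zero (by simp)

noncomputable def shearHom (c : R) : MvPowerSeries (Fin 2) R →ₐ[R] MvPowerSeries (Fin 2) R :=
  substAlgHom (hasSubst_shear c)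

theorem shearHom_X_zero (c : R) : shearHom c (X 0) = X 0 + C c * X 1 :=
  substAlgHom_X _ 0

theorem shearHom_X_one (c : R) : shearHom c (X 1) = X 1 :=
  substAlgHom_X _ 1

theorem shearHom_shearHom (c d : R) (f : MvPowerSeries (Fin 2) R) :
    shearHom c (shearHom d f) = shearHom (c + d) f := by
  rw [shearHom, shearHom, shearHom, substAlgHom_comp_substAlgHom_apply]
  simp only [coe_substAlgHom]
  refine congrArg (subst (R := R) (S := R) · f) (funext fun i => ?_)
  fin_cases i
  · simp only [Fin.zero_eta, Fin.isValue, Matrix.cons_val_zero]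
    rw [subst_add (hasSubst_shear c), subst_mul (hasSubst_shear c), subst_C,
      subst_X (hasSubst_shear c), subst_X (hasSubst_shear c), map_add]
    simp only [Matrix.cons_val_zero, Matrix.cons_val_one, Matrix.cons_val_fin_one]
    ring
  · simp only [Fin.mk_one, Fin.isValue, Matrix.cons_val_one, Matrix.cons_val_fin_one]
    exact subst_X (hasSubst_shear c) 1

theorem shearHom_zero (f : MvPowerSeries (Fin 2) R) : shearHom 0 f = f := by
  have : ![X 0 + C 0 * X 1, X 1] = (X : Fin 2 → MvPowerSeries (Fin 2) R) := by
    funext i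
    fin_cases i <;> simp
  rw [shearHom, coe_substAlgHom, this, subst_self, id]

noncomputable def shear (c : R) : MvPowerSeries (Fin 2) R ≃ₐ[R] MvPowerSeries (Fin 2) R :=
  AlgEquiv.ofAlgHom (shearHom c) (shearHom (-c))
    (AlgHom.ext fun f => by simp [shearHom_shearHom, shearHom_zero])
    (AlgHom.ext fun f => by simp [shearHom_shearHom, shearHom_zero])

theorem shear_X_zero (c : R) : shear c (X 0) = X 0 + C c * X 1 :=
  shearHom_X_zero c

theorem shear_X_one (c : R) : shear c (X 1) = X 1 :=
  shearHom_X_one c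

theorem coeff_toMvPowerSeries_one (p : PowerSeries R) {m : Fin 2 →₀ ℕ} (hm : m 0 = 0) :
    coeff m (p.toMvPowerSeries 1) = PowerSeries.coeff (m 1) p := by
  generalize hn : m 1 = n
  have : m = Finsupp.embDomain (Function.Embedding.punit 1) (Finsupp.single () n) := by
    ext i
    fin_cases i <;> simp [hm, hn, Finsupp.embDomain_single, Function.Embedding.punit]
  rw [this, PowerSeries.toMvPowerSeries_apply]
  exact coeff_embDomain_rename _ _ _

end CommRing

variable {k : Type*} [Field k]

theorem isAssociatedPowModulo_X_one_X_zero :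
    IsAssociatedPowModulo (X 1 : MvPowerSeries (Fin 2) k) (X 0) where
  not_dvd_pow n := by
    rw [X_dvd_iff]
    push Not
    exact ⟨Finsupp.single 1 n, by simp, by simp [X_pow_eq]⟩
  exists_dvd_sub_pow_mul f hf := by
    set p : PowerSeries k := PowerSeries.mk fun n => coeff (Finsupp.single 1 n) f
    have hdvd : X 0 ∣ f - p.toMvPowerSeries 1 := by
      rw [X_dvd_iff]
      intro m hm
      rw [map_sub, coeff_toMvPowerSeries_one p hm, PowerSeries.coeff_mk, sub_eq_zero]
      congr
      ext i
      fin_cases i <;> simp [hm]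
    have hp : p ≠ 0 := fun hp => hf (by simpa [hp] using hdvd)
    refine ⟨p.order.toNat, (PowerSeries.divXPowOrder p).toMvPowerSeries 1,
      (PowerSeries.isUnit_divided_by_X_pow_order hp).map _, ?_⟩
    rwa [← PowerSeries.toMvPowerSeries_X (R := k) (1 : Fin 2), ← map_pow, ← map_mul,
      PowerSeries.X_pow_order_mul_divXPowOrder]

theorem isMaximal_span_X_zero_sub_C_mul_X_one_away (c : k) :
    (Ideal.span {algebraMap (MvPowerSeries (Fin 2) k)
      (Localization.Away (X 1 : MvPowerSeries (Fin 2) k)) (X 0 - C c * X 1)}).IsMaximal := by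
  have h := isAssociatedPowModulo_X_one_X_zero.map_ringEquiv (shear (-c)).toRingEquiv
  simp only [AlgEquiv.coe_ringEquiv, shear_X_zero, shear_X_one, map_neg, neg_mul,
    ← sub_eq_add_neg] at h
  exact h.isMaximal_span_away

end MvPowerSeries

/-- In the localization `A` of `k⟦x, y⟧` away from `y`, the ideals generated by `x` and by
`x - y` are two distinct maximal ideals; in particular `A` is not a local ring. -/
theorem localized_power_series_not_local (k : Type*) [Field k] :
    (Ideal.span {algebraMap (MvPowerSeries (Fin 2) k)
        (Localization.Away (X 1 : MvPowerSeries (Fin 2) k)) (X 0)}).IsMaximal ∧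
    (Ideal.span {algebraMap (MvPowerSeries (Fin 2) k)
        (Localization.Away (X 1 : MvPowerSeries (Fin 2) k)) (X 0 - X 1)}).IsMaximal ∧
    Ideal.span {algebraMap (MvPowerSeries (Fin 2) k)
        (Localization.Away (X 1 : MvPowerSeries (Fin 2) k)) (X 0)} ≠
      Ideal.span {algebraMap (MvPowerSeries (Fin 2) k)
        (Localization.Away (X 1 : MvPowerSeries (Fin 2) k)) (X 0 - X 1)} ∧
    ¬ IsLocalRing (Localization.Away (X 1 : MvPowerSeries (Fin 2) k)) := by
  set φ := algebraMap (MvPowerSeries (Fin 2) k) (Localization.Away (X 1 : MvPowerSeries (Fin 2) k))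
  have hx : (Ideal.span {φ (X 0)}).IsMaximal := by
    simpa using isMaximal_span_X_zero_sub_C_mul_X_one_away (0 : k)
  have hxy : (Ideal.span {φ (X 0 - X 1)}).IsMaximal := by
    simpa using isMaximal_span_X_zero_sub_C_mul_X_one_away (1 : k)
  have hne : Ideal.span {φ (X 0)} ≠ Ideal.span {φ (X 0 - X 1)} := by
    intro h
    have hxy_mem : φ (X 0 - X 1) ∈ Ideal.span {φ (X 0)} := h ▸ Ideal.mem_span_singleton_self _
    have hy_mem : φ (X 1) ∈ Ideal.span {φ (X 0)} := by
      simpa using Ideal.sub_mem _ (Ideal.mem_span_singleton_self _) hxy_mem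
    exact hx.ne_top (Ideal.eq_top_of_isUnit_mem _ hy_mem
      (IsLocalization.Away.algebraMap_isUnit _))
  exact ⟨hx, hxy, hne, fun _ => hne ((IsLocalRing.eq_maximalIdeal hx).trans
    (IsLocalRing.eq_maximalIdeal hxy).symm)⟩
end

section
/- Let A be a commutative Noetherian normal ring and let 𝔭 ⊂ A be a prime ideal such that the canonical map from A to its 𝔭-adic completion A^∧_𝔭 = lim_n A/𝔭ⁿ is an isomorphism. Then A is an integral domain. -/
/-!
Injectivity of `A → A^∧_𝔭` says that `⋂ 𝔭ⁿ = 0`. An idempotent `e` satisfies `e ∈ 𝔭` or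
`1 - e ∈ 𝔭`, and an idempotent in `𝔭` lies in every `𝔭ⁿ`; hence `A` has no nontrivial
idempotents. Since the local rings `A_𝔪` are domains, `A` is reduced and two distinct minimal
primes never lie in a common maximal ideal, so they are comaximal. If `p` is a minimal prime and
`J` the intersection of the (finitely many) others, then `p + J = A` and `p ∩ J = 0`, which
produces an idempotent; its triviality forces `J = A`, so `p = 0` and `A` is a domain.
-/

namespace IsHausdorff

variable {R : Type*} [CommRing R] (I : Ideal R) [IsHausdorff I R] {e : R}

theorem eq_zero_of_isIdempotentElem_of_mem (he : IsIdempotentElem e) (heI : e ∈ I) : e = 0 := by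
  refine IsHausdorff.haus ‹_› e fun n => ?_
  rw [SModEq.zero, smul_eq_mul, Ideal.mul_top, ← he.pow_succ_eq n]
  exact Ideal.pow_le_pow_right n.le_succ (Ideal.pow_mem_pow heI _)

theorem isIdempotentElem_eq_zero_or_one [I.IsPrime] (he : IsIdempotentElem e) :
    e = 0 ∨ e = 1 := by
  have hprod : e * (1 - e) ∈ I := by rw [mul_comm, he.one_sub_mul_self]; exact I.zero_mem
  refine (Ideal.IsPrime.mem_or_mem ‹_› hprod).imp
    (eq_zero_of_isIdempotentElem_of_mem I he) fun h => ?_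
  exact (sub_eq_zero.mp (eq_zero_of_isIdempotentElem_of_mem I he.one_sub h)).symm

end IsHausdorff

theorem Ideal.eq_top_or_eq_top_of_isCoprime_of_inf_eq_bot {R : Type*} [CommRing R]
    (hidem : ∀ e : R, IsIdempotentElem e → e = 0 ∨ e = 1) {I J : Ideal R}
    (hcop : IsCoprime I J) (hinf : I ⊓ J = ⊥) : I = ⊤ ∨ J = ⊤ := by
  obtain ⟨x, hx, y, hy, hxy⟩ := Ideal.isCoprime_iff_exists.mp hcop
  have hxy0 : x * y = 0 := by
    rw [← Ideal.mem_bot, ← hinf]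
    exact ⟨I.mul_mem_right y hx, J.mul_mem_left x hy⟩
  have hx_idem : IsIdempotentElem x := by
    show x * x = x
    linear_combination x * hxy - hxy0
  rcases hidem x hx_idem with rfl | rfl
  · rw [zero_add] at hxy
    exact Or.inr ((Ideal.eq_top_iff_one J).mpr (hxy ▸ hy))
  · exact Or.inl ((Ideal.eq_top_iff_one I).mpr hx)

theorem Ideal.eq_ker_algebraMap_of_mem_minimalPrimes {A : Type*} [CommRing A] (M : Submonoid A)
    (B : Type*) [CommRing B] [Algebra A B] [IsLocalization M B] [IsDomain B]
    {p : Ideal A} (hp : p ∈ minimalPrimes A) (hM : Disjoint (M : Set A) p) :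
    p = RingHom.ker (algebraMap A B) := by
  have hker_le : RingHom.ker (algebraMap A B) ≤ p := by
    intro x hx
    obtain ⟨s, hs⟩ := (IsLocalization.map_eq_zero_iff M B x).mp hx
    refine (hp.1.1.mem_or_mem (hs ▸ p.zero_mem)).resolve_left fun hsp => ?_
    exact hM.ne_of_mem s.2 hsp rfl
  exact le_antisymm (hp.2 ⟨RingHom.ker_isPrime _, bot_le⟩ hker_le) hker_le

theorem Ideal.isCoprime_of_mem_minimalPrimes_s8 {A : Type*} [CommRing A]
    (hloc : ∀ (𝔪 : Ideal A) [𝔪.IsMaximal], IsDomain (Localization.AtPrime 𝔪))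
    {p q : Ideal A} (hp : p ∈ minimalPrimes A) (hq : q ∈ minimalPrimes A) (hne : p ≠ q) :
    IsCoprime p q := by
  rw [Ideal.isCoprime_iff_sup_eq]
  by_contra hsup
  obtain ⟨m, hm, hle⟩ := Ideal.exists_le_maximal _ hsup
  have key (r : Ideal A) (hr : r ∈ minimalPrimes A) (hrm : r ≤ m) :
      r = RingHom.ker (algebraMap A (Localization.AtPrime m)) :=
    Ideal.eq_ker_algebraMap_of_mem_minimalPrimes m.primeCompl _ hr
      (Set.disjoint_compl_left_iff_subset.mpr hrm)
  exact hne ((key p hp (le_sup_left.trans hle)).trans (key q hq (le_sup_right.trans hle)).symm)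

theorem sInf_minimalPrimes_eq_bot (A : Type*) [CommRing A] [IsReduced A] :
    sInf (minimalPrimes A) = ⊥ :=
  (Ideal.sInf_minimalPrimes (I := ⊥)).trans (nilradical_eq_zero A)

theorem isDomain_of_pairwise_isCoprime_minimalPrimes {A : Type*} [CommRing A] [Nontrivial A]
    [IsReduced A] (hfin : (minimalPrimes A).Finite)
    (hidem : ∀ e : A, IsIdempotentElem e → e = 0 ∨ e = 1)
    (hcop : (minimalPrimes A).Pairwise IsCoprime) : IsDomain A := by
  obtain ⟨p, hp⟩ := Ideal.nonempty_minimalPrimes (I := (⊥ : Ideal A)) bot_ne_top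
  set others := hfin.toFinset.erase p
  have hcop_others : IsCoprime p (⨅ q ∈ others, q) := Ideal.isCoprime_biInf fun q hq =>
    hcop hp (hfin.mem_toFinset.mp (Finset.mem_of_mem_erase hq)) (Finset.ne_of_mem_erase hq).symm
  have hinf : p ⊓ ⨅ q ∈ others, q = ⊥ := by
    refine eq_bot_iff.mpr (sInf_minimalPrimes_eq_bot A ▸ le_sInf fun q hq => ?_)
    by_cases hqp : q = p
    · exact hqp ▸ inf_le_left
    · exact inf_le_right.trans (biInf_le _ (Finset.mem_erase.mpr ⟨hqp, hfin.mem_toFinset.mpr hq⟩))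
  rcases Ideal.eq_top_or_eq_top_of_isCoprime_of_inf_eq_bot hidem hcop_others hinf with h | h
  · exact absurd h hp.1.1.ne_top
  · rw [h, inf_top_eq] at hinf
    have : (⊥ : Ideal A).IsPrime := hinf ▸ hp.1.1
    exact IsDomain.of_bot_isPrime A

/-- If `A` is a commutative Noetherian normal ring and `𝔭` is a prime ideal such that the
canonical map from `A` to its `𝔭`-adic completion is an isomorphism, then `A` is an
integral domain. -/
theorem complete_noetherian_normal_is_domain {A : Type*} [CommRing A] [IsNoetherianRing A]
    (hnorm : ∀ (𝔮 : Ideal A) [𝔮.IsPrime],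
      IsDomain (Localization.AtPrime 𝔮) ∧ IsIntegrallyClosed (Localization.AtPrime 𝔮))
    (𝔭 : Ideal A) [𝔭.IsPrime]
    (hcompl : Function.Bijective (algebraMap A (AdicCompletion 𝔭 A))) :
    IsDomain A := by
  have hloc (𝔪 : Ideal A) [𝔪.IsMaximal] : IsDomain (Localization.AtPrime 𝔪) := (hnorm 𝔪).1
  have : IsHausdorff 𝔭 A := AdicCompletion.of_injective_iff.mp hcompl.injective
  have : Nontrivial A := (Ideal.Quotient.mk 𝔭).domain_nontrivial
  have : IsReduced A := isReduced_ofLocalizationMaximal A fun 𝔪 _ => inferInstance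
  exact isDomain_of_pairwise_isCoprime_minimalPrimes (minimalPrimes.finite_of_isNoetherianRing A)
    (fun _ => IsHausdorff.isIdempotentElem_eq_zero_or_one 𝔭)
    (fun _ hp _ hq => Ideal.isCoprime_of_mem_minimalPrimes_s8 hloc hp hq)
end
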